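/- Let G be a finite cyclic group. Then the power graph P(G) is a line graph (i.e., there exists a graph Γ such that P(G) is isomorphic to the line graph of Γ) if and only if |G| is a power of a single prime (including |G| = 1). -/

import Mathlib

/-! If `|G| = p ^ k`, the subgroups of the cyclic group `G` form a chain, so any two elements are
powers of one another and `P(G)` is complete: the line graph of a star.

Otherwise pick primes `p ≠ q` dividing `|G|` with `q` odd, `t` of order `p` and `u` of order `q`.
Then `t` is adjacent to neither `u` nor `u⁻¹ ≠ u`, while `1`, a generator `g` and `g⁻¹` are three
dominating vertices. This cannot happen in a line graph: two of the three common neighbours meet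
the edge `t` at the same endpoint `c`, and an edge avoiding `c` that meets both of them must join
their other endpoints, which forces `u = u⁻¹`. -/

/-- The power graph of a group `G`: distinct `x, y` are adjacent iff one is a positive
integer power of the other. -/
def powerGraph (G : Type) [Group G] : SimpleGraph G where
  Adj x y := x ≠ y ∧ ((∃ n : ℕ, 0 < n ∧ y ^ n = x) ∨ (∃ n : ℕ, 0 < n ∧ x ^ n = y))
  symm := by
    constructor
    rintro x y ⟨hxy, h⟩
    exact ⟨hxy.symm, h.symm⟩
  loopless := by
    constructor
    rintro x ⟨h, -⟩
    exact h rfl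

/-- A vertex is dominating if it is adjacent to every other vertex. -/
def SimpleGraph.IsDominatingVertex {V : Type} (H : SimpleGraph V) (v : V) : Prop :=
  ∀ u, u ≠ v → H.Adj v u

/-- The proper power graph: the induced subgraph of the power graph on the
set of non-dominating vertices. -/
def properPowerGraph (G : Type) [Group G] :=
  (powerGraph G).induce {x : G | ¬ (powerGraph G).IsDominatingVertex x}

/-- A graph is a line graph if it is isomorphic to the line graph of some graph. -/
def IsLineGraph {V : Type} (H : SimpleGraph V) : Prop :=
  ∃ (W : Type) (Γ : SimpleGraph W), Nonempty (H ≃g Γ.lineGraph)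

open Subgroup

namespace SimpleGraph

variable {W : Type*} {Γ : SimpleGraph W}

theorem lineGraph_eq_of_adj_of_notMem {c : W} {d d' e e' : Γ.edgeSet} (hdd' : d ≠ d')
    (hcd : c ∈ (d : Sym2 W)) (hcd' : c ∈ (d' : Sym2 W))
    (hce : c ∉ (e : Sym2 W)) (hce' : c ∉ (e' : Sym2 W))
    (hed : Γ.lineGraph.Adj e d) (hed' : Γ.lineGraph.Adj e d')
    (he'd : Γ.lineGraph.Adj e' d) (he'd' : Γ.lineGraph.Adj e' d') : e = e' := by
  have hd := Sym2.other_spec hcd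
  have hd' := Sym2.other_spec hcd'
  have mem_other : ∀ {f g : Γ.edgeSet} (hc : c ∈ (g : Sym2 W)), c ∉ (f : Sym2 W) →
      Γ.lineGraph.Adj f g → Sym2.Mem.other hc ∈ (f : Sym2 W) := by
    intro f g hc hcf hfg
    obtain ⟨-, w, hwf, hwg⟩ := lineGraph_adj_iff_exists.mp hfg
    rw [← Sym2.other_spec hc, Sym2.mem_iff] at hwg
    rcases hwg with rfl | rfl
    · exact absurd hwf hcf
    · exact hwf
  have hne : Sym2.Mem.other hcd ≠ Sym2.Mem.other hcd' := fun h =>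
    hdd' (Subtype.ext (by rw [← hd, ← hd', h]))
  exact Subtype.ext (Sym2.eq_of_ne_mem hne (mem_other hcd hce hed) (mem_other hcd' hce hed')
    (mem_other hcd hce' he'd) (mem_other hcd' hce' he'd'))

theorem lineGraph_eq_of_common_adj {t u v d₁ d₂ d₃ : Γ.edgeSet}
    (h₁₂ : d₁ ≠ d₂) (h₁₃ : d₁ ≠ d₃) (h₂₃ : d₂ ≠ d₃)
    (hadj : ∀ d ∈ ({d₁, d₂, d₃} : Set Γ.edgeSet),
      Γ.lineGraph.Adj t d ∧ Γ.lineGraph.Adj u d ∧ Γ.lineGraph.Adj v d)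
    (htu : t ≠ u) (htv : t ≠ v) (htu' : ¬ Γ.lineGraph.Adj t u) (htv' : ¬ Γ.lineGraph.Adj t v) :
    u = v := by
  have avoids : ∀ {w}, t ≠ w → ¬ Γ.lineGraph.Adj t w → ∀ c ∈ (t : Sym2 W), c ∉ (w : Sym2 W) :=
    fun htw hadj c hct hcw => hadj (lineGraph_adj_iff_exists.mpr ⟨htw, c, hct, hcw⟩)
  have key : ∀ {d d'}, d ∈ ({d₁, d₂, d₃} : Set Γ.edgeSet) → d' ∈ ({d₁, d₂, d₃} : Set Γ.edgeSet) →
      d ≠ d' → ∀ c ∈ (t : Sym2 W), c ∈ (d : Sym2 W) → c ∈ (d' : Sym2 W) → u = v :=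
    fun hd hd' hdd' c hct hcd hcd' => lineGraph_eq_of_adj_of_notMem hdd' hcd hcd'
      (avoids htu htu' c hct) (avoids htv htv' c hct)
      (hadj _ hd).2.1 (hadj _ hd').2.1 (hadj _ hd).2.2 (hadj _ hd').2.2
  obtain ⟨⟨a, b⟩, hab⟩ := Quot.exists_rep (t : Sym2 W)
  have hendpoint : ∀ d ∈ ({d₁, d₂, d₃} : Set Γ.edgeSet), a ∈ (d : Sym2 W) ∨ b ∈ (d : Sym2 W) := by
    intro d hd
    obtain ⟨-, w, hwt, hwd⟩ := lineGraph_adj_iff_exists.mp (hadj d hd).1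
    rw [← hab] at hwt
    rcases Sym2.mem_iff.mp hwt with rfl | rfl
    · exact .inl hwd
    · exact .inr hwd
  have ha : a ∈ (t : Sym2 W) := hab ▸ Sym2.mem_mk_left a b
  have hb : b ∈ (t : Sym2 W) := hab ▸ Sym2.mem_mk_right a b
  have m₁ : d₁ ∈ ({d₁, d₂, d₃} : Set Γ.edgeSet) := by simp
  have m₂ : d₂ ∈ ({d₁, d₂, d₃} : Set Γ.edgeSet) := by simp
  have m₃ : d₃ ∈ ({d₁, d₂, d₃} : Set Γ.edgeSet) := by simp
  rcases hendpoint d₁ m₁ with h₁ | h₁ <;> rcases hendpoint d₂ m₂ with h₂ | h₂ <;>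
    rcases hendpoint d₃ m₃ with h₃ | h₃ <;>
    first
    | exact key m₁ m₂ h₁₂ _ ‹_› h₁ h₂
    | exact key m₁ m₃ h₁₃ _ ‹_› h₁ h₃
    | exact key m₂ m₃ h₂₃ _ ‹_› h₂ h₃

end SimpleGraph

theorem IsLineGraph.eq_of_common_adj {V : Type} {H : SimpleGraph V} (hH : IsLineGraph H)
    {t u v d₁ d₂ d₃ : V} (h₁₂ : d₁ ≠ d₂) (h₁₃ : d₁ ≠ d₃) (h₂₃ : d₂ ≠ d₃)
    (hadj : ∀ d ∈ ({d₁, d₂, d₃} : Set V), H.Adj t d ∧ H.Adj u d ∧ H.Adj v d)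
    (htu : t ≠ u) (htv : t ≠ v) (htu' : ¬ H.Adj t u) (htv' : ¬ H.Adj t v) : u = v := by
  obtain ⟨W, Γ, ⟨φ⟩⟩ := hH
  refine φ.injective (SimpleGraph.lineGraph_eq_of_common_adj (φ.injective.ne h₁₂)
    (φ.injective.ne h₁₃) (φ.injective.ne h₂₃) ?_ (φ.injective.ne htu) (φ.injective.ne htv)
    (φ.map_adj_iff.not.mpr htu') (φ.map_adj_iff.not.mpr htv'))
  rintro _ (rfl | rfl | rfl) <;> simp only [φ.map_adj_iff] <;> apply hadj <;> simp

theorem not_isLineGraph_of_isDominatingVertex {V : Type} {H : SimpleGraph V}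
    {t u v d₁ d₂ d₃ : V} (h₁₂ : d₁ ≠ d₂) (h₁₃ : d₁ ≠ d₃) (h₂₃ : d₂ ≠ d₃)
    (hdom : ∀ d ∈ ({d₁, d₂, d₃} : Set V), H.IsDominatingVertex d)
    (htu : t ≠ u) (htv : t ≠ v) (huv : u ≠ v) (htu' : ¬ H.Adj t u) (htv' : ¬ H.Adj t v) :
    ¬ IsLineGraph H := by
  intro hH
  refine huv (hH.eq_of_common_adj h₁₂ h₁₃ h₂₃ (fun d hd => ?_) htu htv htu' htv')
  have adj_of_ne : ∀ w, w ≠ d → H.Adj w d := fun w hw => (hdom d hd w hw).symm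
  refine ⟨adj_of_ne t ?_, adj_of_ne u ?_, adj_of_ne v ?_⟩
  · rintro rfl
    exact htu' (hdom t hd u htu.symm)
  · rintro rfl
    exact htu' (hdom u hd t htu).symm
  · rintro rfl
    exact htv' (hdom v hd t htv).symm

theorem isLineGraph_top {V : Type} : IsLineGraph (⊤ : SimpleGraph V) := by
  let Γ := completeBipartiteGraph Unit V
  let f : V → Γ.edgeSet := fun v => ⟨s(.inl (), .inr v), by simp [Γ]⟩
  have hf : f.Bijective := by
    refine ⟨fun v w h => by simpa [f] using h, ?_⟩
    rintro ⟨e, he⟩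
    induction e using Sym2.ind with | _ a b => ?_
    rcases a with ⟨⟩ | a <;> rcases b with ⟨⟩ | b <;> simp [Γ] at he
    · exact ⟨b, rfl⟩
    · exact ⟨a, Subtype.ext Sym2.eq_swap⟩
  refine ⟨Unit ⊕ V, Γ, ⟨Equiv.ofBijective f hf, fun {v w} => ?_⟩⟩
  simp [SimpleGraph.lineGraph_adj_iff_exists, f]

section PowerGraph

variable {G : Type} [Group G]

theorem exists_pos_pow_eq_iff_mem_zpowers {x y : G} (hy : IsOfFinOrder y) :
    (∃ n : ℕ, 0 < n ∧ y ^ n = x) ↔ x ∈ zpowers y := by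
  refine ⟨fun ⟨n, _, hn⟩ => hn ▸ npow_mem_zpowers y n, fun hx => ?_⟩
  obtain ⟨n, rfl⟩ := (Submonoid.mem_powers_iff _ _).mp (hy.mem_powers_iff_mem_zpowers.mpr hx)
  rcases Nat.eq_zero_or_pos n with rfl | hn
  · exact ⟨orderOf y, hy.orderOf_pos, by rw [pow_orderOf_eq_one, pow_zero]⟩
  · exact ⟨n, hn, rfl⟩

theorem powerGraph_adj_iff [Finite G] {x y : G} :
    (powerGraph G).Adj x y ↔ x ≠ y ∧ (x ∈ zpowers y ∨ y ∈ zpowers x) := by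
  change x ≠ y ∧ ((∃ n : ℕ, 0 < n ∧ y ^ n = x) ∨ (∃ n : ℕ, 0 < n ∧ x ^ n = y)) ↔ _
  rw [exists_pos_pow_eq_iff_mem_zpowers (isOfFinOrder_of_finite y),
    exists_pos_pow_eq_iff_mem_zpowers (isOfFinOrder_of_finite x)]

theorem orderOf_dvd_or_dvd_of_powerGraph_adj {x y : G} (h : (powerGraph G).Adj x y) :
    orderOf x ∣ orderOf y ∨ orderOf y ∣ orderOf x := by
  rcases h.2 with ⟨n, -, rfl⟩ | ⟨n, -, rfl⟩
  · exact .inl (orderOf_pow_dvd n)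
  · exact .inr (orderOf_pow_dvd n)

theorem powerGraph_isDominatingVertex_one [Finite G] : (powerGraph G).IsDominatingVertex 1 :=
  fun _ hu => powerGraph_adj_iff.mpr ⟨hu.symm, .inl (one_mem _)⟩

theorem powerGraph_isDominatingVertex_of_forall_mem_zpowers [Finite G] {g : G}
    (hg : ∀ x, x ∈ zpowers g) : (powerGraph G).IsDominatingVertex g :=
  fun u hu => powerGraph_adj_iff.mpr ⟨hu.symm, .inr (hg u)⟩

theorem IsCyclic.mem_zpowers_of_orderOf_dvd [Finite G] [IsCyclic G] {x y : G}
    (h : orderOf x ∣ orderOf y) : x ∈ zpowers y := by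
  classical
  have := Fintype.ofFinite G
  -- `zpowers y` already has as many elements as a cyclic group allows to solve `w ^ orderOf y = 1`.
  have hsub : (zpowers y : Set G) ⊆ {w | w ^ orderOf y = 1} := fun w hw =>
    orderOf_dvd_iff_pow_eq_one.mp (orderOf_dvd_of_mem_zpowers hw)
  have hcard : {w : G | w ^ orderOf y = 1}.ncard ≤ (zpowers y : Set G).ncard := by
    rw [← Nat.card_coe_set_eq (zpowers y : Set G), SetLike.coe_sort_coe, Nat.card_zpowers,
      Set.ncard_eq_toFinset_card', Set.toFinset_ofPred]
    exact IsCyclic.card_pow_eq_one_le (orderOf_pos y)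
  rw [← SetLike.mem_coe, Set.eq_of_subset_of_ncard_le hsub hcard]
  exact orderOf_dvd_iff_pow_eq_one.mp h

theorem powerGraph_eq_top_of_card_eq_prime_pow [Finite G] [IsCyclic G] {p k : ℕ} (hp : p.Prime)
    (hG : Nat.card G = p ^ k) : powerGraph G = ⊤ := by
  ext x y
  rw [powerGraph_adj_iff, SimpleGraph.top_adj]
  refine ⟨And.left, fun hxy => ⟨hxy, ?_⟩⟩
  obtain ⟨i, -, hi⟩ := (Nat.dvd_prime_pow hp).mp (hG ▸ orderOf_dvd_natCard x)
  obtain ⟨j, -, hj⟩ := (Nat.dvd_prime_pow hp).mp (hG ▸ orderOf_dvd_natCard y)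
  rcases le_total i j with h | h
  · exact .inl (IsCyclic.mem_zpowers_of_orderOf_dvd (by rw [hi, hj]; exact pow_dvd_pow p h))
  · exact .inr (IsCyclic.mem_zpowers_of_orderOf_dvd (by rw [hi, hj]; exact pow_dvd_pow p h))

theorem not_isLineGraph_powerGraph_of_prime_dvd [Finite G] [IsCyclic G] {p q : ℕ} (hp : p.Prime)
    (hq : q.Prime) (hpq : p ≠ q) (hpG : p ∣ Nat.card G) (hqG : q ∣ Nat.card G) :
    ¬ IsLineGraph (powerGraph G) := by
  wlog hq2 : q ≠ 2 generalizing p q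
  · exact this hq hp hpq.symm hqG hpG (not_not.mp hq2 ▸ hpq)
  have := Fact.mk hp
  have := Fact.mk hq
  obtain ⟨t, ht⟩ := exists_prime_orderOf_dvd_card' p hpG
  obtain ⟨u, hu⟩ := exists_prime_orderOf_dvd_card' q hqG
  obtain ⟨g, hg⟩ := IsCyclic.exists_generator (α := G)
  have q_dvd : ∀ {m}, orderOf g ∣ m → q ∣ m := fun h =>
    hu ▸ (orderOf_dvd_of_mem_zpowers (hg u)).trans h
  have orderOf_dvd_two : ∀ {w : G}, w = w⁻¹ → orderOf w ∣ 2 := fun h =>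
    orderOf_dvd_of_pow_eq_one (by rw [pow_two]; nth_rw 2 [h]; exact mul_inv_cancel _)
  have hg1 : g ≠ 1 := fun h => hq.one_lt.ne' (Nat.dvd_one.mp (q_dvd (by rw [h, orderOf_one])))
  have ht_ne : ∀ {w}, orderOf w = q → t ≠ w := fun hw h => hpq (by rw [← ht, h, hw])
  have ht_not_adj : ∀ {w}, orderOf w = q → ¬ (powerGraph G).Adj t w := fun hw h => by
    rcases orderOf_dvd_or_dvd_of_powerGraph_adj h with h | h <;> rw [ht, hw] at h
    · exact hpq ((Nat.prime_dvd_prime_iff_eq hp hq).mp h)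
    · exact hpq ((Nat.prime_dvd_prime_iff_eq hq hp).mp h).symm
  have hq_not_dvd_two : ¬ q ∣ 2 := fun h => hq2 ((Nat.prime_dvd_prime_iff_eq hq Nat.prime_two).mp h)
  have hu_inv : orderOf u⁻¹ = q := by rw [orderOf_inv, hu]
  refine not_isLineGraph_of_isDominatingVertex (d₁ := 1) (d₂ := g) (d₃ := g⁻¹)
    hg1.symm (inv_ne_one.mpr hg1).symm ?_ ?_ (ht_ne hu) (ht_ne hu_inv) ?_
    (ht_not_adj hu) (ht_not_adj hu_inv)
  · exact fun h => hq_not_dvd_two (q_dvd (orderOf_dvd_two h))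
  · rintro _ (rfl | rfl | rfl)
    · exact powerGraph_isDominatingVertex_one
    · exact powerGraph_isDominatingVertex_of_forall_mem_zpowers hg
    · exact powerGraph_isDominatingVertex_of_forall_mem_zpowers
        (by simpa only [zpowers_inv] using hg)
  · exact fun h => hq_not_dvd_two (hu ▸ orderOf_dvd_two h)

end PowerGraph

theorem Nat.primeFactors_nontrivial_of_not_prime_pow {n : ℕ} (hn : n ≠ 0)
    (h : ¬ ∃ p k : ℕ, p.Prime ∧ n = p ^ k) : n.primeFactors.Nontrivial := by
  have hn1 : n ≠ 1 := fun h1 => h ⟨2, 0, Nat.prime_two, h1⟩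
  refine (Nat.not_isPrimePow_iff_nontrivial_of_two_le (by omega)).mp fun hpow => h ?_
  obtain ⟨p, k, hp, -, rfl⟩ := (isPrimePow_nat_iff n).mp hpow
  exact ⟨p, k, hp, rfl⟩

theorem powerGraph_isLineGraph_iff_of_cyclic (G : Type) [Group G] [Finite G]
    (hcyc : IsCyclic G) :
    IsLineGraph (powerGraph G) ↔ ∃ (p n : ℕ), p.Prime ∧ Nat.card G = p ^ n := by
  have := hcyc
  constructor
  · intro hline
    by_contra hpow
    obtain ⟨p, hp, q, hq, hpq⟩ :=
      Nat.primeFactors_nontrivial_of_not_prime_pow Nat.card_pos.ne' hpow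
    rw [Finset.mem_coe, Nat.mem_primeFactors] at hp hq
    exact not_isLineGraph_powerGraph_of_prime_dvd hp.1 hq.1 hpq hp.2.1 hq.2.1 hline
  · rintro ⟨p, k, hp, hG⟩
    rw [powerGraph_eq_top_of_card_eq_prime_pow hp hG]
    exact isLineGraph_top
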